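/- Let α be a real algebraic number of degree m and L the Liouville constant. Then for each n with 1 ≤ n ≤ m-1, w*_n(αL) ≤ 2m²n + m - 1; i.e., for every w > 2m²n + m - 1, only finitely many real algebraic numbers γ of degree n satisfy 0 < |αL - γ| < H(γ)^{-w-1}. -/

import Mathlib

/-!
Write `ξ = α L` and let `p_k / q_k`, `q_k = 10 ^ k!`, be the truncations of `L`, so that
`|ξ - (p_k / q_k) α| ≪ 1 / q_{k+1} = q_k ^ (-(k+1))`. Let `γ` have degree `n < m` and height `H`,
with primitive minimal polynomial `P`. Since `(p_k / q_k) α` has degree `m`, `P((p_k / q_k) α) ≠ 0`,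
and after clearing denominators its norm from `ℚ(α)` is a nonzero integer; bounding the other
conjugates gives `|P((p_k / q_k) α)| ≫ q_k ^ (-nm) H ^ (-(m-1))`, hence, by the mean value bound,
`|(p_k / q_k) α - γ| ≫ q_k ^ (-nm) H ^ (-m)`. Choosing `k` with `q_{k+1} < H ^ (w+1) ≪ q_{k+2}`
and using this lower bound at `k` and `k + 1` yields `H ^ (w+1) ≪ H ^ (m (2nm + 1))`, so `H` is
bounded once `w + 1 > 2m²n + m`, and there are only finitely many such `γ`.
-/

open Polynomial Filter

/-- Primitive integer minimal polynomial of a real number. -/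
noncomputable def intMin (x : ℝ) : Polynomial ℤ :=
  (IsLocalization.integerNormalization (nonZeroDivisors ℤ) (minpoly ℚ x)).primPart

/-- Height of an integer polynomial: max absolute value of its coefficients. -/
def polyHeight (P : Polynomial ℤ) : ℕ :=
  (Finset.range (P.natDegree + 1)).sup fun i => (P.coeff i).natAbs

/-- Height of an algebraic real number. -/
noncomputable def aheight (x : ℝ) : ℕ := polyHeight (intMin x)

/-- Degree of a real number over ℚ. -/
noncomputable def adeg (x : ℝ) : ℕ := (minpoly ℚ x).natDegree

/-- Liouville constant L = ∑ 10^{-j!}, j ≥ 1. -/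
noncomputable def Lconst : ℝ := ∑' j : ℕ, 1 / (10 : ℝ) ^ (Nat.factorial (j + 1))

/-- Numerator of k-th truncation of L. -/
def pk (k : ℕ) : ℤ := ∑ j ∈ Finset.range k, 10 ^ ((Nat.factorial k) - (Nat.factorial (j + 1)))

/-- Denominator of k-th truncation of L. -/
def qk (k : ℕ) : ℤ := 10 ^ (Nat.factorial k)

/-- Set of degree-n algebraic approximants witnessing exponent w. -/
noncomputable def wSet (ξ : ℝ) (n : ℕ) (w : ℝ) : Set ℝ :=
  {γ : ℝ | IsAlgebraic ℚ γ ∧ adeg γ = n ∧ 0 < |ξ - γ| ∧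
    |ξ - γ| < (aheight γ : ℝ) ^ (-w - 1)}

/-- ξ is a U_m-number: w*_m(ξ) = ∞ and w*_n(ξ) < ∞ for 1 ≤ n < m. -/
noncomputable def IsUm (ξ : ℝ) (m : ℕ) : Prop :=
  (∀ w : ℝ, (wSet ξ m w).Infinite) ∧
    ∀ n : ℕ, 1 ≤ n → n < m → ∃ w : ℝ, (wSet ξ n w).Finite

/-- ξ is a Liouville number. -/
def IsLiouvilleNum (x : ℝ) : Prop :=
  ∀ w : ℝ, 0 < w →
    {r : ℚ | 0 < |x - (r : ℝ)| ∧ |x - (r : ℝ)| < (r.den : ℝ) ^ (-w)}.Infinite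

/-- Height of a rational number: max of |numerator| and denominator. -/
def qheight (r : ℚ) : ℕ := max r.num.natAbs r.den

open scoped Nat

lemma intMin_ne_zero (x : ℝ) : intMin x ≠ 0 := primPart_ne_zero _

lemma aeval_intMin {x : ℝ} (hx : IsAlgebraic ℚ x) : aeval x (intMin x) = 0 := by
  refine aeval_primPart_eq_zero ?_ <| IsLocalization.integerNormalization_aeval_eq_zero _ _
    (minpoly.aeval ℚ x)
  rw [Ne, IsFractionRing.integerNormalization_eq_zero_iff]
  exact minpoly.ne_zero hx.isIntegral

lemma natDegree_intMin (x : ℝ) : (intMin x).natDegree = adeg x := by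
  obtain ⟨b, hb, hbp⟩ := IsLocalization.integerNormalization_spec (nonZeroDivisors ℤ)
    (minpoly ℚ x)
  have hb0 : (b : ℚ) ≠ 0 := by exact_mod_cast nonZeroDivisors.ne_zero hb
  rw [intMin, natDegree_primPart, adeg,
    ← natDegree_map_eq_of_injective (algebraMap ℤ ℚ).injective_int, hbp,
    ← Int.cast_smul_eq_zsmul ℚ, smul_eq_C_mul, natDegree_C_mul hb0]

lemma abs_coeff_le_polyHeight (P : ℤ[X]) (i : ℕ) : |(P.coeff i : ℝ)| ≤ polyHeight P := by
  rcases le_or_gt i P.natDegree with h | h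
  · rw [← Int.cast_abs, ← Int.natCast_natAbs, Int.cast_natCast, Nat.cast_le]
    exact Finset.le_sup (f := fun i => (P.coeff i).natAbs) (Finset.mem_range_succ_iff.mpr h)
  · simp [coeff_eq_zero_of_natDegree_lt h]

lemma finite_setOf_natDegree_le_polyHeight_le (n C : ℕ) :
    {P : ℤ[X] | P.natDegree ≤ n ∧ polyHeight P ≤ C}.Finite := by
  have hbox : (boxPoly n (fun _ => -C) (fun _ => C)).Finite := by
    refine Set.finite_of_ncard_ne_zero ?_
    rw [ncard_boxPoly, Finset.prod_ne_zero_iff]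
    intro i _
    simpa using Int.ceil_le.mpr (by simp)
  refine hbox.subset fun P ⟨hn, hC⟩ => ⟨hn, fun i => abs_le.mp ?_⟩
  exact (abs_coeff_le_polyHeight P i).trans (by exact_mod_cast hC)

lemma finite_setOf_adeg_eq_aheight_le (n C : ℕ) :
    {γ : ℝ | IsAlgebraic ℚ γ ∧ adeg γ = n ∧ aheight γ ≤ C}.Finite := by
  refine ((finite_setOf_natDegree_le_polyHeight_le n C).sdiff (t := {0})).biUnion
    (t := fun P => {x : ℝ | aeval x P = 0}) (fun P hP => ?_) |>.subset ?_
  · have hP0 : P.map (Int.castRingHom ℝ) ≠ 0 :=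
      (Polynomial.map_ne_zero_iff (Int.castRingHom ℝ).injective_int).mpr hP.2
    simpa [aeval_def, eval_map] using finite_setOfPred_isRoot hP0
  · rintro γ ⟨hγ, hdeg, hH⟩
    exact Set.mem_biUnion ⟨⟨(natDegree_intMin γ).trans_le hdeg.le, hH⟩, intMin_ne_zero γ⟩
      (aeval_intMin hγ)

section Evaluation

variable {Q : ℤ[X]} {n : ℕ} {H R : ℝ}

lemma norm_aeval_le {𝕜 : Type*} [RCLike 𝕜] (hQ : Q.natDegree ≤ n)
    (hH : ∀ i, |(Q.coeff i : ℝ)| ≤ H) (hR : 1 ≤ R) {z : 𝕜} (hz : ‖z‖ ≤ R) :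
    ‖aeval z Q‖ ≤ (n + 1) * H * R ^ n := by
  rw [aeval_eq_sum_range' (Nat.lt_succ_of_le hQ)]
  calc ‖∑ i ∈ Finset.range (n + 1), Q.coeff i • z ^ i‖
      ≤ ∑ i ∈ Finset.range (n + 1), H * R ^ n := by
        refine (norm_sum_le _ _).trans (Finset.sum_le_sum fun i hi => ?_)
        rw [zsmul_eq_mul, norm_mul, norm_pow, ← RCLike.ofReal_intCast, RCLike.norm_ofReal]
        gcongr
        · exact (abs_nonneg _).trans (hH 0)
        · exact hH i
        · exact (pow_le_pow_left₀ (norm_nonneg z) hz i).trans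
            (pow_le_pow_right₀ hR (Finset.mem_range_succ_iff.mp hi))
    _ = (n + 1) * H * R ^ n := by simp [mul_assoc]

lemma abs_aeval_sub_aeval_le (hQ : Q.natDegree ≤ n) (hH : ∀ i, |(Q.coeff i : ℝ)| ≤ H)
    (hR : 1 ≤ R) {x y : ℝ} (hx : |x| ≤ R) (hy : |y| ≤ R) :
    |aeval x Q - aeval y Q| ≤ (n + 1) ^ 2 * H * R ^ n * |x - y| := by
  simp only [aeval_eq_sum_range' (Nat.lt_succ_of_le hQ), zsmul_eq_mul, ← Finset.sum_sub_distrib,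
    ← mul_sub]
  calc |∑ i ∈ Finset.range (n + 1), (Q.coeff i : ℝ) * (x ^ i - y ^ i)|
      ≤ ∑ i ∈ Finset.range (n + 1), H * (|x - y| * (n + 1) * R ^ n) := by
        refine (Finset.abs_sum_le_sum_abs _ _).trans (Finset.sum_le_sum fun i hi => ?_)
        have hi : i ≤ n := Finset.mem_range_succ_iff.mp hi
        rw [abs_mul]
        refine mul_le_mul (hH i) ((abs_pow_sub_pow_le x y i).trans ?_) (abs_nonneg _)
          ((abs_nonneg _).trans (hH 0))
        gcongr
        · exact_mod_cast hi.trans n.le_succ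
        · exact (pow_le_pow_left₀ (by positivity) (max_le hx hy) _).trans
            (pow_le_pow_right₀ hR (by omega))
    _ = (n + 1) ^ 2 * H * R ^ n * |x - y| := by
      rw [Finset.sum_const, Finset.card_range, nsmul_eq_mul]; push_cast; ring

end Evaluation

lemma IsIntegral.pow_smul_aeval {R A : Type*} [CommRing R] [CommRing A] [Algebra R A] {x : A}
    {c : R} (h : IsIntegral R (c • x)) {Q : R[X]} {n : ℕ} (hQ : Q.natDegree ≤ n) :
    IsIntegral R (c ^ n • aeval x Q) := by
  rw [aeval_eq_sum_range' (Nat.lt_succ_of_le hQ), Finset.smul_sum]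
  refine IsIntegral.sum _ fun i hi => ?_
  have hi : i ≤ n := Finset.mem_range_succ_iff.mp hi
  rw [show c ^ n • Q.coeff i • x ^ i = (Q.coeff i * c ^ (n - i)) • (c • x) ^ i by
    rw [_root_.smul_pow, smul_smul, smul_smul, mul_assoc, ← pow_add, Nat.sub_add_cancel hi,
      mul_comm]]
  exact (h.pow i).smul _

lemma map_aeval_int {A B F : Type*} [CommRing A] [CommRing B] [FunLike F A B]
    [RingHomClass F A B] (f : F) (x : A) (Q : ℤ[X]) : f (aeval x Q) = aeval (f x) Q :=
  (aeval_algHom_apply (f : A →+* B).toIntAlgHom x Q).symm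

section NormArgument

variable {K : Type*} [Field K] [Algebra ℚ K] [FiniteDimensional ℚ K]

lemma one_le_norm_mul_pow_of_isIntegral {y : K} (hy : IsIntegral ℤ y) (hy0 : y ≠ 0)
    (σ₀ : K →ₐ[ℚ] ℂ) {B : ℝ} (hB : ∀ σ : K →ₐ[ℚ] ℂ, ‖σ y‖ ≤ B) :
    1 ≤ ‖σ₀ y‖ * B ^ (Module.finrank ℚ K - 1) := by
  classical
  obtain ⟨N, hN⟩ := IsIntegrallyClosed.isIntegral_iff.mp (Algebra.isIntegral_norm ℚ hy)
  have hN0 : N ≠ 0 := by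
    rintro rfl
    exact hy0 (by simpa using hN.symm)
  calc (1 : ℝ) ≤ ‖(N : ℂ)‖ := by
        rw [Complex.norm_intCast]; exact_mod_cast Int.one_le_abs hN0
    _ = ‖∏ σ : K →ₐ[ℚ] ℂ, σ y‖ := by
        rw [← Algebra.norm_eq_prod_embeddings, ← hN]; simp
    _ = ‖σ₀ y‖ * ∏ σ ∈ Finset.univ.erase σ₀, ‖σ y‖ := by
        rw [norm_prod, (Finset.mul_prod_erase _ _ (Finset.mem_univ _)).symm]
    _ ≤ ‖σ₀ y‖ * B ^ (Module.finrank ℚ K - 1) := by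
        gcongr
        refine (Finset.prod_le_prod (fun _ _ => norm_nonneg _) fun σ _ => hB σ).trans_eq ?_
        rw [Finset.prod_const, Finset.card_erase_of_mem (Finset.mem_univ _), Finset.card_univ,
          AlgHom.card]

lemma one_le_mul_norm_aeval {β : K} {c : ℤ} (hc : c ≠ 0) (hcβ : IsIntegral ℤ (c • β))
    {Q : ℤ[X]} {n : ℕ} (hQ : Q.natDegree ≤ n) (hQβ : aeval β Q ≠ 0) {H B : ℝ}
    (hH : ∀ i, |(Q.coeff i : ℝ)| ≤ H) (hB1 : 1 ≤ B) (hB : ∀ σ : K →ₐ[ℚ] ℂ, ‖σ β‖ ≤ B)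
    (σ₀ : K →ₐ[ℚ] ℂ) :
    1 ≤ |(c : ℝ)| ^ (n * Module.finrank ℚ K) * ((n + 1) * H * B ^ n) ^ (Module.finrank ℚ K - 1)
      * ‖σ₀ (aeval β Q)‖ := by
  have := algebraRat.charZero K
  have hσ : ∀ σ : K →ₐ[ℚ] ℂ, ‖σ (c ^ n • aeval β Q)‖ = |(c : ℝ)| ^ n * ‖aeval (σ β) Q‖ := by
    intro σ
    rw [map_zsmul, map_aeval_int, zsmul_eq_mul, Int.cast_pow, norm_mul, norm_pow,
      Complex.norm_intCast]
  have key := one_le_norm_mul_pow_of_isIntegral (hcβ.pow_smul_aeval hQ)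
    (by rw [zsmul_eq_mul]; exact mul_ne_zero (by simp [hc]) hQβ) σ₀
    (B := |(c : ℝ)| ^ n * ((n + 1) * H * B ^ n)) fun σ =>
      (hσ σ).trans_le <| by gcongr; exact norm_aeval_le hQ hH hB1 (hB σ)
  obtain ⟨d, hd⟩ : ∃ d, Module.finrank ℚ K = d + 1 :=
    ⟨_, (Nat.succ_pred_eq_of_pos Module.finrank_pos).symm⟩
  rw [hσ, hd, Nat.add_sub_cancel, mul_pow, ← pow_mul] at key
  rw [hd, Nat.add_sub_cancel, mul_add, mul_one, pow_add, map_aeval_int]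
  exact key.trans_eq (by ring)

lemma aeval_ratCast_mul_ne_zero {x : ℝ} {r : ℚ} (hr : r ≠ 0) {Q : ℤ[X]} (hQ : Q ≠ 0)
    (hdeg : Q.natDegree < adeg x) : aeval (r * x) Q ≠ 0 := by
  set P : ℚ[X] := (Q.map (algebraMap ℤ ℚ)).comp (C r * X)
  have hCrX : (C r * X).natDegree = 1 := natDegree_C_mul_X r hr
  have hQ' : Q.map (algebraMap ℤ ℚ) ≠ 0 :=
    (Polynomial.map_ne_zero_iff (algebraMap ℤ ℚ).injective_int).mpr hQ
  have hP0 : P ≠ 0 := by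
    rw [← leadingCoeff_ne_zero, leadingCoeff_comp (by omega)]
    exact mul_ne_zero (leadingCoeff_ne_zero.mpr hQ') (pow_ne_zero _ (by simpa using hr))
  intro h
  have hPx : aeval x P = 0 := by
    rw [aeval_comp, map_mul, aeval_C, aeval_X, aeval_map_algebraMap, eq_ratCast]
    exact h
  have := natDegree_le_natDegree (minpoly.degree_le_of_ne_zero ℚ x hP0 hPx)
  rw [natDegree_comp, hCrX, mul_one,
    natDegree_map_eq_of_injective (algebraMap ℤ ℚ).injective_int] at this
  exact absurd hdeg (not_lt.mpr this)

open IntermediateField in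
lemma exists_one_le_mul_abs_aeval {α : ℝ} (hα : IsAlgebraic ℚ α) {n : ℕ} (hn : n < adeg α) :
    ∃ C : ℝ, 0 < C ∧ ∀ (Q : ℤ[X]) (H : ℝ), Q ≠ 0 → Q.natDegree ≤ n →
      (∀ i, |(Q.coeff i : ℝ)| ≤ H) → ∀ p q : ℤ, p ≠ 0 → |p| ≤ q →
        1 ≤ C * (q : ℝ) ^ (n * adeg α) * H ^ (adeg α - 1) * |aeval (p / q * α) Q| := by
  have : FiniteDimensional ℚ ℚ⟮α⟯ := adjoin.finiteDimensional hα.isIntegral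
  have := algebraRat.charZero ℚ⟮α⟯
  set g := AdjoinSimple.gen ℚ α
  obtain ⟨d, hd0, hd⟩ :=
    ((IsFractionRing.isAlgebraic_iff ℤ ℚ ℚ⟮α⟯).mpr (.of_finite ℚ g)).exists_integral_multiple
  obtain ⟨B, hB⟩ := Finite.exists_le fun σ : ℚ⟮α⟯ →ₐ[ℚ] ℂ => ‖σ g‖
  refine ⟨|(d : ℝ)| ^ (n * adeg α) * ((n + 1) * max B 1 ^ n) ^ (adeg α - 1), by positivity,
    fun Q H hQ hQn hH p q hp hpq => ?_⟩
  have hq : 0 < q := (abs_pos.mpr hp).trans_le hpq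
  set r : ℚ := p / q
  have hr : ((r : ℚ) : ℝ) = p / q := by push_cast [r]; rfl
  have hr1 : |(r : ℝ)| ≤ 1 := by
    have hq' : (0 : ℝ) < q := by exact_mod_cast hq
    rw [hr, abs_div, abs_of_pos hq', div_le_one hq']
    exact_mod_cast hpq
  set β : ℚ⟮α⟯ := r * g
  have hβ : algebraMap ℚ⟮α⟯ ℝ β = r * α := by
    simp [β, g]
  have hcβ : (d * q) • β = p • d • g := by
    simp only [β, r, zsmul_eq_mul]
    push_cast
    field_simp
  let σ₀ : ℚ⟮α⟯ →ₐ[ℚ] ℂ := (Complex.ofRealHom.comp (algebraMap ℚ⟮α⟯ ℝ)).toRatAlgHom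
  have key := one_le_mul_norm_aeval (mul_ne_zero hd0 hq.ne') (hcβ ▸ hd.smul p) hQn
    (fun h => aeval_ratCast_mul_ne_zero
      (div_ne_zero (Int.cast_ne_zero.mpr hp) (Int.cast_ne_zero.mpr hq.ne')) hQ (hQn.trans_lt hn)
      (by rw [← hβ, ← map_aeval_int, h, map_zero]))
    hH (le_max_right B 1) (fun σ => ?_) σ₀
  · have hσ₀ : ‖σ₀ (aeval β Q)‖ = |aeval (p / q * α) Q| := by
      change ‖((algebraMap ℚ⟮α⟯ ℝ (aeval β Q) : ℝ) : ℂ)‖ = _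
      rw [Complex.norm_real, Real.norm_eq_abs, map_aeval_int, hβ, hr]
    have hfin : Module.finrank ℚ ℚ⟮α⟯ = adeg α := adjoin.finrank hα.isIntegral
    rw [hσ₀, hfin, Int.cast_mul, abs_mul, abs_of_pos (Int.cast_pos.mpr hq), mul_pow,
      mul_right_comm _ H, mul_pow] at key
    exact key.trans_eq (by ring)
  · rw [map_mul, map_ratCast, norm_mul, ← one_mul (max B 1)]
    exact mul_le_mul (by simpa using hr1) ((hB σ).trans (le_max_left B 1)) (norm_nonneg _)
      zero_le_one

lemma exists_one_le_mul_abs_sub {α : ℝ} (hα : IsAlgebraic ℚ α) {n : ℕ} (hn : n < adeg α)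
    (R : ℝ) : ∃ C : ℝ, 0 < C ∧ ∀ γ : ℝ, IsAlgebraic ℚ γ → adeg γ ≤ n → |γ| ≤ R →
      ∀ p q : ℤ, p ≠ 0 → |p| ≤ q →
        1 ≤ C * (q : ℝ) ^ (n * adeg α) * (aheight γ : ℝ) ^ adeg α * |p / q * α - γ| := by
  obtain ⟨C, hC, hsep⟩ := exists_one_le_mul_abs_aeval hα hn
  set R' := max (max R |α|) 1
  refine ⟨C * ((n + 1) ^ 2 * R' ^ n), by positivity, fun γ hγ hγn hγR p q hp hpq => ?_⟩
  have hQn : (intMin γ).natDegree ≤ n := (natDegree_intMin γ).trans_le hγn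
  have hH := abs_coeff_le_polyHeight (intMin γ)
  have hq : (0 : ℝ) < q := by exact_mod_cast (abs_pos.mpr hp).trans_le hpq
  have hpqα : |p / q * α| ≤ R' := by
    rw [abs_mul, abs_div, abs_of_pos hq]
    refine (mul_le_of_le_one_left (abs_nonneg α) ?_).trans (le_max_of_le_left (le_max_right _ _))
    rw [div_le_one hq]
    exact_mod_cast hpq
  have hlip := abs_aeval_sub_aeval_le hQn hH (le_max_right _ 1) hpqα
    (le_max_of_le_left (le_max_of_le_left hγR))
  rw [aeval_intMin hγ, sub_zero] at hlip
  calc 1 ≤ C * (q : ℝ) ^ (n * adeg α) * (aheight γ : ℝ) ^ (adeg α - 1) *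
        |aeval (p / q * α) (intMin γ)| := hsep _ _ (intMin_ne_zero γ) hQn hH p q hp hpq
    _ ≤ C * (q : ℝ) ^ (n * adeg α) * (aheight γ : ℝ) ^ (adeg α - 1) *
        ((n + 1) ^ 2 * aheight γ * R' ^ n * |p / q * α - γ|) := by gcongr; exact hlip
    _ = C * ((n + 1) ^ 2 * R' ^ n) * (q : ℝ) ^ (n * adeg α) * (aheight γ : ℝ) ^ adeg α *
        |p / q * α - γ| := by
      rw [← Nat.sub_add_cancel (hn.trans_le' (Nat.zero_le n) : 0 < adeg α), pow_succ,
        Nat.add_sub_cancel]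
      ring

section LiouvilleConstant

open LiouvilleNumber

lemma qk_cast (k : ℕ) : (qk k : ℝ) = 10 ^ k ! := by simp [qk]

lemma pk_div_qk_eq_sum (k : ℕ) :
    (pk k : ℝ) / qk k = ∑ j ∈ Finset.range k, 1 / (10 : ℝ) ^ (j + 1)! := by
  rw [pk, qk_cast, Int.cast_sum, Finset.sum_div]
  refine Finset.sum_congr rfl fun j hj => ?_
  have hj : (j + 1)! ≤ k ! := Nat.factorial_le (Finset.mem_range.mp hj)
  rw [div_eq_div_iff (by positivity) (by positivity), one_mul, Int.cast_pow, Int.cast_ofNat,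
    ← pow_add, Nat.sub_add_cancel hj]

lemma Lconst_sub_pk_div_qk (k : ℕ) : Lconst - pk k / qk k = remainder 10 k := by
  have h := (partialSum_add_remainder (by norm_num : (1 : ℝ) < 10) 0).trans
    (partialSum_add_remainder (by norm_num : (1 : ℝ) < 10) k).symm
  rw [partialSum, partialSum, Finset.sum_range_one,
    Finset.sum_range_succ' (fun i => 1 / (10 : ℝ) ^ i !) k] at h
  rw [pk_div_qk_eq_sum]
  change remainder 10 0 - _ = _
  linarith

lemma Lconst_sub_pk_div_qk_pos (k : ℕ) : 0 < Lconst - pk k / qk k :=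
  Lconst_sub_pk_div_qk k ▸ remainder_pos (by norm_num) k

lemma Lconst_sub_pk_div_qk_le (k : ℕ) : Lconst - pk k / qk k ≤ 2 / 10 ^ (k + 1)! := by
  rw [Lconst_sub_pk_div_qk]
  refine (remainder_lt' k (by norm_num)).le.trans ?_
  rw [mul_one_div]
  gcongr
  norm_num

lemma pk_pos {k : ℕ} (hk : 1 ≤ k) : 0 < pk k :=
  Finset.sum_pos (fun _ _ => by positivity) ⟨0, Finset.mem_range.mpr hk⟩

lemma pk_le_qk (k : ℕ) : pk k ≤ qk k := by
  have hq : (0 : ℝ) < qk k := by rw [qk_cast]; positivity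
  have hL : Lconst < 1 := by
    have := Lconst_sub_pk_div_qk_le 0
    simp only [pk, Finset.range_zero, Finset.sum_empty, Int.cast_zero, zero_div, sub_zero,
      zero_add, Nat.factorial_one, pow_one] at this
    linarith
  have := Lconst_sub_pk_div_qk_pos k
  have : (pk k : ℝ) / qk k < 1 := by linarith
  rw [div_lt_one hq] at this
  exact_mod_cast this.le

end LiouvilleConstant

lemma Monotone.exists_lt_le_succ {α : Type*} [LinearOrder α] {f : ℕ → α} (hf : Monotone f)
    {x : α} {N : ℕ} (hN : f N < x) (hx : ∃ k, x ≤ f k) :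
    ∃ k, N ≤ k ∧ f k < x ∧ x ≤ f (k + 1) := by
  classical
  have hfind : N < Nat.find hx := by
    by_contra! h
    exact (Nat.find_spec hx).not_gt (hN.trans_le' (hf h))
  obtain ⟨k, hk⟩ : ∃ k, Nat.find hx = k + 1 := Nat.exists_eq_add_one.mpr (by omega)
  refine ⟨k, by omega, not_le.mp (Nat.find_min hx (by omega)), hk ▸ Nat.find_spec hx⟩

lemma pow_pow_le_of_pow_le_mul_pow {x c : ℝ} {k N : ℕ} (hx : 1 ≤ x) (h : x ^ k ≤ c * x ^ N)
    (hN : 2 * N ≤ k) : (x ^ k) ^ N ≤ c ^ (2 * N) := by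
  have hxk : x ^ (k - N) ≤ c := by
    rwa [← Nat.sub_add_cancel (by omega : N ≤ k), pow_add,
      mul_le_mul_iff_left₀ (by positivity)] at h
  calc (x ^ k) ^ N = x ^ (k * N) := (pow_mul x k N).symm
    _ ≤ x ^ ((k - N) * (2 * N)) := pow_le_pow_right₀ hx <| by
        have : k ≤ 2 * (k - N) := by omega
        nlinarith
    _ = (x ^ (k - N)) ^ (2 * N) := pow_mul x _ _
    _ ≤ c ^ (2 * N) := pow_le_pow_left₀ (by positivity) hxk _

lemma le_rpow_one_div_of_rpow_add_le {H c a ε : ℝ} (hH : 0 < H) (hε : 0 < ε)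
    (h : H ^ (a + ε) ≤ c * H ^ a) : H ≤ c ^ (1 / ε) := by
  rw [Real.rpow_add hH, mul_comm, mul_le_mul_iff_left₀ (by positivity)] at h
  calc H = (H ^ ε) ^ (1 / ε) := by
        rw [← Real.rpow_mul hH.le, mul_one_div_cancel hε.ne', Real.rpow_one]
    _ ≤ c ^ (1 / ε) := by gcongr

/-- The gap argument in the abstract: `δ j` stands for `|(p_j / q_j) α - γ|` and `u` for
`H ^ (w + 1)`; the lower bound is used at the two consecutive indices between which `(a + 1) u`
falls. -/
lemma le_of_factorial_gap {E a u : ℝ} {N : ℕ} (δ : ℕ → ℝ) (hE : 0 < E) (ha : 0 ≤ a)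
    (hu : (10 : ℝ) ^ (2 * N + 2)! < u)
    (hlower : ∀ j, 1 ≤ j → 1 ≤ E * ((10 : ℝ) ^ j !) ^ N * δ j)
    (hupper : ∀ j, δ j ≤ a / 10 ^ (j + 1)! + u⁻¹) :
    u ≤ 2 * E * (2 * (a + 1) * E) ^ (2 * N) := by
  set D := a + 1
  have hu0 : 0 < u := hu.trans_le' (by positivity)
  have hDu : u ≤ D * u := le_mul_of_one_le_left hu0.le (by linarith)
  obtain ⟨k, hk, hlo, hhi⟩ := Monotone.exists_lt_le_succ (f := fun j => (10 : ℝ) ^ (j + 1)!)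
    (fun i j hij => pow_le_pow_right₀ (by norm_num) (Nat.factorial_le (by omega)))
    (hu.trans_le hDu) (by
      obtain ⟨k, hk⟩ := pow_unbounded_of_one_lt (D * u) (by norm_num : (1 : ℝ) < 10)
      exact ⟨k, hk.le.trans (pow_le_pow_right₀ (by norm_num)
        ((Nat.le_succ k).trans (Nat.self_le_factorial _)))⟩)
  set x : ℝ := 10 ^ (k !)
  have hx1 : 1 ≤ x := one_le_pow₀ (by norm_num)
  have hxk : (10 : ℝ) ^ (k + 1)! = x ^ (k + 1) := by
    rw [← pow_mul, Nat.factorial_succ, mul_comm]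
  rw [hxk] at hlo
  have haD : a / D ≤ 1 := (div_le_one (by positivity)).mpr (by linarith)
  have hnext : u ≤ 2 * E * (x ^ (k + 1)) ^ N := by
    have hδ : δ (k + 1) ≤ 2 / u := calc
      δ (k + 1) ≤ a / (D * u) + u⁻¹ := (hupper (k + 1)).trans (by gcongr)
      _ = (a / D + 1) / u := by field_simp
      _ ≤ 2 / u := by gcongr; linarith
    have := (hlower (k + 1) (by omega)).trans
      (by gcongr : _ ≤ E * ((10 : ℝ) ^ (k + 1)!) ^ N * (2 / u))
    rw [hxk, ← mul_div_assoc, le_div_iff₀ hu0] at this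
    linarith
  have hcur : x ^ (k + 1) ≤ 2 * D * E * x ^ N := by
    have hδ : δ k ≤ 2 * D / x ^ (k + 1) := calc
      δ k ≤ a / x ^ (k + 1) + D / x ^ (k + 1) := by
        refine (hupper k).trans ?_
        rw [hxk]
        gcongr
        rw [inv_le_comm₀ hu0 (by positivity), inv_div, div_le_iff₀ (by positivity)]
        linarith
      _ ≤ 2 * D / x ^ (k + 1) := by rw [← add_div]; gcongr; linarith
    have := (hlower k (by omega)).trans (by gcongr : _ ≤ E * x ^ N * (2 * D / x ^ (k + 1)))
    rw [← mul_div_assoc, le_div_iff₀ (by positivity)] at this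
    linarith
  calc u ≤ 2 * E * (x ^ (k + 1)) ^ N := hnext
    _ ≤ 2 * E * (2 * D * E) ^ (2 * N) := by
      gcongr
      exact pow_pow_le_of_pow_le_mul_pow hx1 hcur (by omega)

lemma abs_pk_div_qk_mul_sub_le (α γ : ℝ) (j : ℕ) :
    |pk j / qk j * α - γ| ≤ 2 * |α| / 10 ^ (j + 1)! + |α * Lconst - γ| := by
  have hL : |pk j / qk j * α - α * Lconst| ≤ 2 * |α| / 10 ^ (j + 1)! := by
    rw [show (pk j / qk j * α - α * Lconst : ℝ) = -(α * (Lconst - pk j / qk j)) by ring,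
      abs_neg, abs_mul, abs_of_pos (Lconst_sub_pk_div_qk_pos j)]
    calc |α| * (Lconst - pk j / qk j) ≤ |α| * (2 / 10 ^ (j + 1)!) := by
          gcongr; exact Lconst_sub_pk_div_qk_le j
      _ = 2 * |α| / 10 ^ (j + 1)! := by ring
  linarith [abs_sub_le (pk j / qk j * α) (α * Lconst) γ]

lemma exists_aheight_le_of_mem_wSet {α : ℝ} (hα : IsAlgebraic ℚ α) {n : ℕ} (hn : n < adeg α)
    {w : ℝ} (hw : (adeg α * (2 * (n * adeg α) + 1) : ℕ) < w + 1) :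
    ∃ C : ℝ, ∀ γ ∈ wSet (α * Lconst) n w, (aheight γ : ℝ) ≤ C := by
  set m := adeg α
  set N := n * m
  obtain ⟨C, hC, hsep⟩ := exists_one_le_mul_abs_sub hα hn (|α * Lconst| + 1)
  set c := 2 * C * (2 * (2 * |α| + 1) * C) ^ (2 * N)
  set ε := w + 1 - (m * (2 * N + 1) : ℕ)
  refine ⟨max (10 ^ (2 * N + 2)!) (c ^ (1 / ε)), fun γ ⟨hγ, hdeg, _, hlt⟩ => ?_⟩
  by_contra! hH
  set H := (aheight γ : ℝ)
  set u := H ^ (w + 1)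
  have hH1 : 1 < H := hH.trans_le' ((one_le_pow₀ (by norm_num)).trans (le_max_left _ _))
  have hm1 : 1 ≤ m * (2 * N + 1) := Nat.one_le_iff_ne_zero.mpr
    (Nat.mul_ne_zero (by omega) (by omega))
  have hw1 : 1 ≤ w + 1 := hw.le.trans' (by exact_mod_cast hm1)
  have hHu : H ≤ u := Real.self_le_rpow_of_one_le hH1.le hw1
  have hlt' : |α * Lconst - γ| < u⁻¹ := by
    rwa [← Real.rpow_neg (by positivity), neg_add']
  have hγR : |γ| ≤ |α * Lconst| + 1 := by
    have := abs_sub_abs_le_abs_sub γ (α * Lconst)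
    rw [abs_sub_comm] at this
    linarith [inv_le_one_of_one_le₀ (hH1.le.trans hHu)]
  have hgap := le_of_factorial_gap (E := C * H ^ m) (a := 2 * |α|) (u := u) (N := N)
    (fun j => |pk j / qk j * α - γ|) (by positivity) (by positivity)
    (hHu.trans_lt' ((le_max_left _ _).trans_lt hH))
    (fun j hj => by
      have := hsep γ hγ hdeg.le hγR (pk j) (qk j) (pk_pos hj).ne'
        ((abs_of_pos (pk_pos hj)).trans_le (pk_le_qk j))
      rw [show ((qk j : ℤ) : ℝ) ^ (n * adeg α) = ((10 : ℝ) ^ j !) ^ N by rw [qk_cast]] at this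
      exact this.trans_eq (by ring))
    (fun j => (abs_pk_div_qk_mul_sub_le α γ j).trans (by gcongr))
  have : H ^ ((m * (2 * N + 1) : ℕ) + ε) ≤ c * H ^ ((m * (2 * N + 1) : ℕ) : ℝ) := by
    rw [add_sub_cancel, Real.rpow_natCast, pow_mul, pow_succ]
    rw [← mul_assoc (2 * (2 * |α| + 1)) C, mul_pow] at hgap
    exact hgap.trans_eq (by ring)
  exact (le_rpow_one_div_of_rpow_add_le (by positivity) (sub_pos.mpr hw) this).not_gt
    (hH.trans_le' (le_max_right _ _))

theorem stmt12 (α : ℝ) (hα : IsAlgebraic ℚ α) (m : ℕ) (hm : adeg α = m)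
    (n : ℕ) (hn1 : 1 ≤ n) (hnm : n ≤ m - 1) :
    ∀ w : ℝ, w > 2 * (m : ℝ) ^ 2 * n + m - 1 → (wSet (α * Lconst) n w).Finite := by
  intro w hw
  subst hm
  obtain ⟨C, hC⟩ := exists_aheight_le_of_mem_wSet hα (n := n) (by omega) (w := w) (by
    push_cast
    linarith)
  refine (finite_setOf_adeg_eq_aheight_le n ⌈C⌉₊).subset fun γ hγ => ⟨hγ.1, hγ.2.1, ?_⟩
  exact_mod_cast (hC γ hγ).trans (Nat.le_ceil C)
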